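/- arXiv:1311.1150 — 3 statements merged into one kernel-verified Lean document; each statement's English description precedes it below -/
import Mathlib

section
/- Let I ⊆ ℝ be an open interval, a, b, f₂ : ℝ → ℝ with f₂(x) + b(x)² ≥ 0 on I, let ε ∈ {1, −1}, and set w(x) = −b(x) + ε·√(f₂(x) + b(x)²); assume w(x) ≠ 0 on I. Let E be differentiable on I with E'(x) = −f₂(x)/(2w(x)), let J be differentiable on I with J(x) ≠ 0 and J'(x) = a(x)·exp(E(x)), and define c(x) = w(x)·exp(E(x)) / (2J(x)). Let S be differentiable on I with S'(x) = ε·√(f₂(x) + b(x)²), and G differentiable on I with G'(x) = c(x)·exp(S(x)). Then for every constant C ∈ ℝ, the function y(x) = J(x)·exp(−E(x)) + exp(S(x))/(C − G(x)) satisfies y'(x) = a(x) + b(x)y(x) + c(x)y(x)² at every x ∈ I with C − G(x) ≠ 0. -/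
/-!
`u = J · exp(−E)` is a particular solution: since `c · u = w / 2` and `f₂ = w² + 2bw`, the
Riccati right-hand side at `u` is `a + (b + w/2) u = a + f₂ u / (2w)`, which is `u'`.
Writing `y = u + v`, the Riccati equation for `y` becomes the Bernoulli equation
`v' = (b + 2cu) v + c v² = s v + c v²` with `s = ε√(f₂ + b²)`, and `v = exp S / (C − G)`
solves it because `(1/v)' = −s/v − c`.
-/

open Real

theorem HasDerivAt.riccati_add_of_bernoulli {u v : ℝ → ℝ} {x a b c u' v' : ℝ}
    (hu : HasDerivAt u u' x) (hu' : u' = a + b * u x + c * u x ^ 2)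
    (hv : HasDerivAt v v' x) (hv' : v' = (b + 2 * c * u x) * v x + c * v x ^ 2) :
    HasDerivAt (fun t => u t + v t)
      (a + b * (u x + v x) + c * (u x + v x) ^ 2) x :=
  (hu.add hv).congr_deriv (by rw [hu', hv']; ring)

theorem hasDerivAt_exp_div_sub_bernoulli {S G : ℝ → ℝ} {x s c C : ℝ}
    (hS : HasDerivAt S s x) (hG : HasDerivAt G (c * exp (S x)) x) (hCG : C - G x ≠ 0) :
    HasDerivAt (fun t => exp (S t) / (C - G t))
      (s * (exp (S x) / (C - G x)) + c * (exp (S x) / (C - G x)) ^ 2) x :=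
  (hS.exp.div (hG.const_sub C) hCG).congr_deriv (by field_simp; ring)

theorem mul_mul_exp_neg_eq_half {J E w : ℝ} (hJ : J ≠ 0) :
    w * exp E / (2 * J) * (J * exp (-E)) = w / 2 := by
  rw [exp_neg]
  field_simp

theorem hasDerivAt_mul_exp_neg_riccati {J E : ℝ → ℝ} {x a b w f : ℝ}
    (hJ : HasDerivAt J (a * exp (E x)) x) (hE : HasDerivAt E (-f / (2 * w)) x)
    (hJx : J x ≠ 0) (hw : w ≠ 0) (hf : f = w ^ 2 + 2 * b * w) :
    HasDerivAt (fun t => J t * exp (-E t))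
      (a + b * (J x * exp (-E x))
        + w * exp (E x) / (2 * J x) * (J x * exp (-E x)) ^ 2) x := by
  refine (hJ.mul hE.neg.exp).congr_deriv ?_
  have hexp : exp (E x) * exp (-E x) = 1 := by rw [← exp_add, add_neg_cancel, exp_zero]
  have hcu := mul_mul_exp_neg_eq_half (w := w) (E := E x) hJx
  have hquot : f / (2 * w) = w / 2 + b := by rw [hf]; field_simp
  simp only [Pi.neg_apply]
  linear_combination a * hexp + J x * exp (-E x) * (hquot - hcu)

/-- Theorem 4 (Case 4): with `w = −b + ε√(f₂ + b²) ≠ 0`, `E' = −f₂/(2w)`,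
`J ≠ 0`, `J' = a · exp E`, `c = w · exp E / (2J)`, `S' = ε√(f₂ + b²)` and
`G' = c · exp S`, the function `y = J · exp(−E) + exp S / (C − G)` solves the
Riccati equation wherever `C − G ≠ 0`. -/
theorem riccati_case4_general
    (p q : ℝ) (a b c f₂ E J S G : ℝ → ℝ) (ε : ℝ) (hε : ε = 1 ∨ ε = -1)
    (hnonneg : ∀ x ∈ Set.Ioo p q, f₂ x + b x ^ 2 ≥ 0)
    (hw : ∀ x ∈ Set.Ioo p q, -b x + ε * Real.sqrt (f₂ x + b x ^ 2) ≠ 0)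
    (hE : ∀ x ∈ Set.Ioo p q,
      HasDerivAt E (-f₂ x / (2 * (-b x + ε * Real.sqrt (f₂ x + b x ^ 2)))) x)
    (hJne : ∀ x ∈ Set.Ioo p q, J x ≠ 0)
    (hJ : ∀ x ∈ Set.Ioo p q, HasDerivAt J (a x * Real.exp (E x)) x)
    (hcdef : ∀ x ∈ Set.Ioo p q,
      c x = (-b x + ε * Real.sqrt (f₂ x + b x ^ 2)) * Real.exp (E x) / (2 * J x))
    (hS : ∀ x ∈ Set.Ioo p q,
      HasDerivAt S (ε * Real.sqrt (f₂ x + b x ^ 2)) x)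
    (hG : ∀ x ∈ Set.Ioo p q, HasDerivAt G (c x * Real.exp (S x)) x)
    (C : ℝ) :
    ∀ x ∈ Set.Ioo p q, C - G x ≠ 0 →
      HasDerivAt (fun t => J t * Real.exp (-E t) + Real.exp (S t) / (C - G t))
        (a x + b x * (J x * Real.exp (-E x) + Real.exp (S x) / (C - G x))
          + c x * (J x * Real.exp (-E x) + Real.exp (S x) / (C - G x)) ^ 2) x := by
  intro x hx hCG
  set s := ε * √(f₂ x + b x ^ 2)
  have hs : s ^ 2 = f₂ x + b x ^ 2 := by
    rw [mul_pow, sq_sqrt (hnonneg x hx)]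
    rcases hε with rfl | rfl <;> ring
  have hcu : c x * (J x * exp (-E x)) = (-b x + s) / 2 := by
    rw [hcdef x hx, mul_mul_exp_neg_eq_half (hJne x hx)]
  have particular := hasDerivAt_mul_exp_neg_riccati (b := b x) (hJ x hx) (hE x hx) (hJne x hx)
    (hw x hx) (by linear_combination -hs)
  rw [← hcdef x hx] at particular
  refine particular.riccati_add_of_bernoulli rfl
    (hasDerivAt_exp_div_sub_bernoulli (hS x hx) (hG x hx) hCG) ?_
  rw [mul_assoc 2, hcu]
  ring
end

section
/- Let I ⊆ ℝ be an open interval, a, c, f₃ : ℝ → ℝ with c(x) ≠ 0 on I, and let K be differentiable on I with K(x) ≠ 0 and K'(x) = f₃(x)/(2c(x)) for all x ∈ I. Define b(x) = ( f₃(x) − 4a(x)c(x) − c(x)²K(x)² ) / ( 2c(x)K(x) ). Let B be differentiable on I with B'(x) = b(x) + c(x)K(x) = ( f₃(x) − 4a(x)c(x) + c(x)²K(x)² ) / ( 2c(x)K(x) ), and G differentiable on I with G'(x) = c(x)·exp(B(x)). Then y_p(x) = K(x)/2 solves the Riccati equation on I, and for every constant C₉ ∈ ℝ the function y(x) = K(x)/2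 + exp(B(x))/(C₉ − G(x)) satisfies y'(x) = a(x) + b(x)y(x) + c(x)y(x)² at every x ∈ I with C₉ − G(x) ≠ 0. -/
/-!
Shifting by a particular solution `y_p` turns the Riccati equation into the Bernoulli equation
`v' = (b + 2 c y_p) v + c v²`, and `exp B / (C₉ - G)` solves it because `B' = b + c K = b + 2 c y_p`
and `G' = c exp B`. That `y_p = K / 2` is itself a solution is the algebraic identity
`a + b K/2 + c K²/4 = f₃ / (4c)`, which is how `b` was chosen.
-/

open Real

theorem hasDerivAt_add_of_riccati_of_bernoulli {a b c y v : ℝ → ℝ} {x : ℝ}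
    (hy : HasDerivAt y (a x + b x * y x + c x * y x ^ 2) x)
    (hv : HasDerivAt v ((b x + 2 * c x * y x) * v x + c x * v x ^ 2) x) :
    HasDerivAt (fun t => y t + v t)
      (a x + b x * (y x + v x) + c x * (y x + v x) ^ 2) x :=
  (hy.add hv).congr_deriv (by ring)

theorem hasDerivAt_exp_div_const_sub {B G : ℝ → ℝ} {β γ C x : ℝ}
    (hB : HasDerivAt B β x) (hG : HasDerivAt G (γ * exp (B x)) x) (hCG : C - G x ≠ 0) :
    HasDerivAt (fun t => exp (B t) / (C - G t))
      (β * (exp (B x) / (C - G x)) + γ * (exp (B x) / (C - G x)) ^ 2) x :=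
  (hB.exp.div (hG.const_sub C) hCG).congr_deriv (by field_simp; ring)

theorem riccati_case6_rhs_half_eq {a b c f K : ℝ} (hc : c ≠ 0) (hK : K ≠ 0)
    (hb : b = (f - 4 * a * c - c ^ 2 * K ^ 2) / (2 * c * K)) :
    a + b * (K / 2) + c * (K / 2) ^ 2 = f / (2 * c) / 2 := by
  subst hb
  field_simp
  ring

/-- Theorem 6 (Case 6): with `K ≠ 0`, `K' = f₃/(2c)`,
`b = (f₃ − 4ac − c²K²)/(2cK)`, `B' = b + cK = (f₃ − 4ac + c²K²)/(2cK)` and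
`G' = c · exp B`, the function `y_p = K/2` solves the Riccati equation, and
`y = K/2 + exp B / (C₉ − G)` solves it wherever `C₉ − G ≠ 0`. -/
theorem riccati_case6
    (p q : ℝ) (a b c f₃ K B G : ℝ → ℝ)
    (hc : ∀ x ∈ Set.Ioo p q, c x ≠ 0)
    (hKne : ∀ x ∈ Set.Ioo p q, K x ≠ 0)
    (hK : ∀ x ∈ Set.Ioo p q, HasDerivAt K (f₃ x / (2 * c x)) x)
    (hb : ∀ x ∈ Set.Ioo p q,
      b x = (f₃ x - 4 * a x * c x - c x ^ 2 * K x ^ 2) / (2 * c x * K x))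
    (hB : ∀ x ∈ Set.Ioo p q, HasDerivAt B (b x + c x * K x) x)
    (hG : ∀ x ∈ Set.Ioo p q, HasDerivAt G (c x * Real.exp (B x)) x)
    (C₉ : ℝ) :
    (∀ x ∈ Set.Ioo p q,
      HasDerivAt (fun t => K t / 2)
        (a x + b x * (K x / 2) + c x * (K x / 2) ^ 2) x) ∧
    (∀ x ∈ Set.Ioo p q, C₉ - G x ≠ 0 →
      HasDerivAt (fun t => K t / 2 + Real.exp (B t) / (C₉ - G t))
        (a x + b x * (K x / 2 + Real.exp (B x) / (C₉ - G x))
          + c x * (K x / 2 + Real.exp (B x) / (C₉ - G x)) ^ 2) x) := by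
  have particular : ∀ x ∈ Set.Ioo p q, HasDerivAt (fun t => K t / 2)
      (a x + b x * (K x / 2) + c x * (K x / 2) ^ 2) x := fun x hx => by
    rw [riccati_case6_rhs_half_eq (hc x hx) (hKne x hx) (hb x hx)]
    exact (hK x hx).div_const 2
  refine ⟨particular, fun x hx hCG => hasDerivAt_add_of_riccati_of_bernoulli (particular x hx) ?_⟩
  exact (hasDerivAt_exp_div_const_sub (hB x hx) (hG x hx) hCG).congr_deriv (by ring)
end

section
/- Let I ⊆ ℝ be an open interval, a, c, f₄ : ℝ → ℝ with c(x) ≠ 0 and f₄(x) ≠ 0 on I, suppose q(x) = f₄(x)/c(x) is differentiable on I, and define b(x) = (1/f₄(x))·[ c(x)·q'(x) − f₄(x)²/2 − 2a(x)c(x) ]. Let B be differentiable on I with B'(x) = b(x) + f₄(x), and G differentiable on I with G'(x) = c(x)·exp(B(x)). Then y_p(x) = f₄(x)/(2c(x)) solves the Riccati equation on I, and for every constant C₁₁ ∈ ℝ the function y(x) = f₄(x)/(2c(x)) + exp(B(x))/(C₁₁ − G(x)) satisfies y'(x) = a(x) + b(x)y(x) + c(x)y(x)² at every x ∈ I with C₁₁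 − G(x) ≠ 0. -/
/-!
The condition on `b` says precisely that `y_p = f₄/(2c)`, whose derivative is `q'/2`, solves the
Riccati equation. Substituting `y = y_p + u` turns the Riccati equation into the Bernoulli equation
`u' = (b + 2c·y_p)·u + c·u²`, and `b + 2c·y_p = b + f₄ = B'`; the Bernoulli equation
`u' = B'·u + c·u²` is solved by `u = exp B / (C₁₁ - G)` since `G' = c·exp B`.
-/

open Real

theorem HasDerivAt.riccati_add {a b c x : ℝ} {y u : ℝ → ℝ}
    (hy : HasDerivAt y (a + b * y x + c * y x ^ 2) x)
    (hu : HasDerivAt u ((b + 2 * c * y x) * u x + c * u x ^ 2) x) :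
    HasDerivAt (fun t => y t + u t) (a + b * (y x + u x) + c * (y x + u x) ^ 2) x :=
  (hy.add hu).congr_deriv (by ring)

theorem hasDerivAt_exp_div_sub {B G : ℝ → ℝ} {β γ C x : ℝ} (hB : HasDerivAt B β x)
    (hG : HasDerivAt G (γ * exp (B x)) x) (hne : C - G x ≠ 0) :
    HasDerivAt (fun t => exp (B t) / (C - G t))
      (β * (exp (B x) / (C - G x)) + γ * (exp (B x) / (C - G x)) ^ 2) x := by
  refine (hB.exp.div ((hasDerivAt_const x C).sub hG) hne).congr_deriv ?_
  simp only [Pi.sub_apply]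
  field_simp
  ring

theorem hasDerivAt_div_two_mul_riccati {f c : ℝ → ℝ} {a b q' x : ℝ} (hc : c x ≠ 0)
    (hf : f x ≠ 0) (hq : HasDerivAt (fun t => f t / c t) q' x)
    (hb : b = (1 / f x) * (c x * q' - f x ^ 2 / 2 - 2 * a * c x)) :
    HasDerivAt (fun t => f t / (2 * c t)) (a + b * (f x / (2 * c x)) + c x * (f x / (2 * c x)) ^ 2)
      x := by
  have hhalf : (fun t => f t / (2 * c t)) = fun t => f t / c t / 2 := by
    funext t; rw [div_div, mul_comm]
  rw [hhalf]
  refine (hq.div_const 2).congr_deriv ?_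
  rw [hb]
  field_simp
  ring

/-- Theorem 8 (Case 8): with `f₄ ≠ 0`, `f₄/c` differentiable with derivative
`q'`, `b = (1/f₄)[c·q' − f₄²/2 − 2ac]`, `B' = b + f₄` and `G' = c · exp B`,
the function `y_p = f₄/(2c)` solves the Riccati equation, and
`y = f₄/(2c) + exp B / (C₁₁ − G)` solves it wherever `C₁₁ − G ≠ 0`. -/
theorem riccati_case8
    (p q : ℝ) (a b c f₄ q' B G : ℝ → ℝ)
    (hc : ∀ x ∈ Set.Ioo p q, c x ≠ 0)
    (hf : ∀ x ∈ Set.Ioo p q, f₄ x ≠ 0)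
    (hq : ∀ x ∈ Set.Ioo p q, HasDerivAt (fun t => f₄ t / c t) (q' x) x)
    (hb : ∀ x ∈ Set.Ioo p q,
      b x = (1 / f₄ x) * (c x * q' x - f₄ x ^ 2 / 2 - 2 * a x * c x))
    (hB : ∀ x ∈ Set.Ioo p q, HasDerivAt B (b x + f₄ x) x)
    (hG : ∀ x ∈ Set.Ioo p q, HasDerivAt G (c x * Real.exp (B x)) x)
    (C₁₁ : ℝ) :
    (∀ x ∈ Set.Ioo p q,
      HasDerivAt (fun t => f₄ t / (2 * c t))
        (a x + b x * (f₄ x / (2 * c x)) + c x * (f₄ x / (2 * c x)) ^ 2) x) ∧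
    (∀ x ∈ Set.Ioo p q, C₁₁ - G x ≠ 0 →
      HasDerivAt (fun t => f₄ t / (2 * c t) + Real.exp (B t) / (C₁₁ - G t))
        (a x + b x * (f₄ x / (2 * c x) + Real.exp (B x) / (C₁₁ - G x))
          + c x * (f₄ x / (2 * c x) + Real.exp (B x) / (C₁₁ - G x)) ^ 2) x) := by
  have particular : ∀ x ∈ Set.Ioo p q,
      HasDerivAt (fun t => f₄ t / (2 * c t))
        (a x + b x * (f₄ x / (2 * c x)) + c x * (f₄ x / (2 * c x)) ^ 2) x := fun x hx =>
    hasDerivAt_div_two_mul_riccati (hc x hx) (hf x hx) (hq x hx) (hb x hx)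
  refine ⟨particular, fun x hx hne => (particular x hx).riccati_add ?_⟩
  have hB' : b x + f₄ x = b x + 2 * c x * (f₄ x / (2 * c x)) := by
    field_simp [hc x hx]
  exact hasDerivAt_exp_div_sub (hB' ▸ hB x hx) (hG x hx) hne
end
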